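/- The orthogonal projection onto the orthogonal complement of col(X) plus the orthogonal projection onto X·null(D) equals the orthogonal projection onto null(D X⁺), when X has full column rank: P_{null(DX⁺)} = P_{null(Xᵀ)} + P_{X·null(D)}. -/

import Mathlib

/-! `ker Xᵀ` and `X · ker D` are orthogonal, so the sum of their orthogonal projections is the
orthogonal projection onto `ker Xᵀ ⊔ X · ker D`. When `XᵀX` is invertible this sum is all of
`ker (D (XᵀX)⁻¹ Xᵀ)`: a vector `x` in it splits as `(x - X w) + X w` with `w = (XᵀX)⁻¹ Xᵀ x`,
where `D w = 0` and `Xᵀ (x - X w) = 0`. Orthogonal projections onto a subspace being unique,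
the two sides agree. -/

open Matrix

/-- `P` is the matrix of the orthogonal projection of `ℝⁿ` onto `S`. -/
def IsOrthProjOn {n : ℕ} (P : Matrix (Fin n) (Fin n) ℝ)
    (S : Submodule ℝ (Fin n → ℝ)) : Prop :=
  Pᵀ = P ∧ P * P = P ∧ (∀ x, P.mulVec x ∈ S) ∧ (∀ x ∈ S, P.mulVec x = x)


namespace Matrix

variable {ι κ ν : Type*} [Fintype ι] [Fintype κ]

theorem isUnit_of_rank_eq_card [DecidableEq κ] {K : Type*} [Field K] {A : Matrix κ κ K}
    (hA : A.rank = Fintype.card κ) : IsUnit A := by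
  rw [← mulVec_surjective_iff_isUnit]
  have hrange : LinearMap.range A.mulVecLin = ⊤ :=
    Submodule.eq_top_of_finrank_eq (by rw [Module.finrank_fintype_fun_eq_card]; exact hA)
  exact LinearMap.range_eq_top.mp hrange

theorem isUnit_transpose_mul_self_of_rank_eq_card [DecidableEq κ] {K : Type*} [Field K]
    [LinearOrder K] [IsStrictOrderedRing K] {X : Matrix ι κ K} (hX : X.rank = Fintype.card κ) :
    IsUnit (Xᵀ * X) :=
  isUnit_of_rank_eq_card (by rw [rank_transpose_mul_self, hX])

variable {R : Type*} [CommRing R]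

theorem dotProduct_eq_zero_of_mem_ker_transpose_of_mem_range (X : Matrix ι κ R)
    {u : ι → R} (hu : u ∈ LinearMap.ker Xᵀ.mulVecLin) {v : ι → R}
    (hv : v ∈ LinearMap.range X.mulVecLin) : u ⬝ᵥ v = 0 := by
  obtain ⟨w, rfl⟩ := hv
  rw [LinearMap.mem_ker, mulVecLin_apply] at hu
  rw [mulVecLin_apply, dotProduct_mulVec, ← mulVec_transpose, hu, zero_dotProduct]

theorem ker_mul_inv_transpose_mul_self_mul_transpose [DecidableEq κ] [Fintype ν]
    (D : Matrix ν κ R) {X : Matrix ι κ R} (hX : IsUnit (Xᵀ * X)) :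
    LinearMap.ker (D * ((Xᵀ * X)⁻¹ * Xᵀ)).mulVecLin =
      LinearMap.ker Xᵀ.mulVecLin ⊔ (LinearMap.ker D.mulVecLin).map X.mulVecLin := by
  have hdet : IsUnit (Xᵀ * X).det := (isUnit_iff_isUnit_det _).mp hX
  apply le_antisymm
  · intro x hx
    rw [LinearMap.mem_ker, mulVecLin_apply, ← mulVec_mulVec, ← mulVec_mulVec] at hx
    set w := (Xᵀ * X)⁻¹ *ᵥ (Xᵀ *ᵥ x)
    have hXw : Xᵀ *ᵥ (X *ᵥ w) = Xᵀ *ᵥ x := by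
      rw [mulVec_mulVec, mulVec_mulVec, mul_nonsing_inv _ hdet, one_mulVec]
    refine Submodule.mem_sup.mpr ⟨x - X *ᵥ w, ?_, X *ᵥ w, ⟨w, hx, rfl⟩, sub_add_cancel _ _⟩
    rw [LinearMap.mem_ker, mulVecLin_apply, mulVec_sub, hXw, sub_self]
  · refine sup_le (fun u hu => ?_) ?_
    · rw [LinearMap.mem_ker, mulVecLin_apply] at hu ⊢
      rw [← mulVec_mulVec, ← mulVec_mulVec, hu, mulVec_zero, mulVec_zero]
    · rintro _ ⟨w, hw, rfl⟩
      rw [SetLike.mem_coe, LinearMap.mem_ker, mulVecLin_apply] at hw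
      rw [LinearMap.mem_ker, mulVecLin_apply, mulVecLin_apply, mulVec_mulVec, Matrix.mul_assoc,
        Matrix.mul_assoc, nonsing_inv_mul _ hdet, Matrix.mul_one, hw]

end Matrix

namespace IsOrthProjOn

variable {n : ℕ} {S T : Submodule ℝ (Fin n → ℝ)} {P Q : Matrix (Fin n) (Fin n) ℝ}

theorem dotProduct_mulVec_comm (hP : IsOrthProjOn P S) (x y : Fin n → ℝ) :
    P *ᵥ x ⬝ᵥ y = x ⬝ᵥ P *ᵥ y := by
  conv_rhs => rw [← hP.1]
  rw [dotProduct_mulVec, vecMul_transpose]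

theorem mul_eq_right (hP : IsOrthProjOn P S) (hQ : IsOrthProjOn Q S) : Q * P = P :=
  ext_iff_mulVec.mpr fun x => by rw [← mulVec_mulVec, hQ.2.2.2 _ (hP.2.2.1 x)]

theorem unique (hP : IsOrthProjOn P S) (hQ : IsOrthProjOn Q S) : P = Q :=
  calc P = (Q * P)ᵀ := by rw [hP.mul_eq_right hQ, hP.1]
    _ = P * Q := by rw [transpose_mul, hP.1, hQ.1]
    _ = Q := hQ.mul_eq_right hP

theorem mulVec_eq_zero (hP : IsOrthProjOn P S) {y : Fin n → ℝ}
    (hy : ∀ s ∈ S, s ⬝ᵥ y = 0) : P *ᵥ y = 0 := by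
  have hPy := hP.2.2.1 y
  refine dotProduct_self_eq_zero.mp ?_
  rw [hP.dotProduct_mulVec_comm, hP.2.2.2 _ hPy, dotProduct_comm]
  exact hy _ hPy

theorem add (hP : IsOrthProjOn P S) (hQ : IsOrthProjOn Q T)
    (hST : ∀ u ∈ S, ∀ v ∈ T, u ⬝ᵥ v = 0) : IsOrthProjOn (P + Q) (S ⊔ T) := by
  have hPT : ∀ v ∈ T, P *ᵥ v = 0 := fun v hv => hP.mulVec_eq_zero fun u hu => hST u hu v hv
  have hQS : ∀ u ∈ S, Q *ᵥ u = 0 := fun u hu =>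
    hQ.mulVec_eq_zero fun v hv => by rw [dotProduct_comm]; exact hST u hu v hv
  have hPQ : P * Q = 0 :=
    ext_iff_mulVec.mpr fun x => by rw [← mulVec_mulVec, hPT _ (hQ.2.2.1 x), zero_mulVec]
  have hQP : Q * P = 0 :=
    ext_iff_mulVec.mpr fun x => by rw [← mulVec_mulVec, hQS _ (hP.2.2.1 x), zero_mulVec]
  refine ⟨by rw [transpose_add, hP.1, hQ.1], ?_, fun x => ?_, fun x hx => ?_⟩
  · rw [add_mul, mul_add, mul_add, hP.2.1, hQ.2.1, hPQ, hQP, add_zero, zero_add]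
  · rw [add_mulVec]
    exact Submodule.add_mem_sup (hP.2.2.1 x) (hQ.2.2.1 x)
  · obtain ⟨s, hs, t, ht, rfl⟩ := Submodule.mem_sup.mp hx
    rw [add_mulVec, mulVec_add, mulVec_add, hP.2.2.2 s hs, hPT t ht, hQS s hs, hQ.2.2.2 t ht,
      add_zero, zero_add]

end IsOrthProjOn

/-- When `X` has full column rank (so `X⁺ = (XᵀX)⁻¹Xᵀ`), the
orthogonal projection onto `null(D X⁺)` equals the sum of the orthogonal
projections onto `null(Xᵀ) = col(X)^⊥` and onto `X·null(D)`:
`P_{null(DX⁺)} = P_{null(Xᵀ)} + P_{X·null(D)}`. -/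
theorem proj_null_DXpinv_sum {m n p : ℕ}
    (D : Matrix (Fin m) (Fin p) ℝ) (X : Matrix (Fin n) (Fin p) ℝ)
    (hX : X.rank = p)
    (P₁ P₂ P₃ : Matrix (Fin n) (Fin n) ℝ)
    (hP₁ : IsOrthProjOn P₁
      (LinearMap.ker (D * ((Xᵀ * X)⁻¹ * Xᵀ)).mulVecLin))
    (hP₂ : IsOrthProjOn P₂ (LinearMap.ker (Xᵀ).mulVecLin))
    (hP₃ : IsOrthProjOn P₃
      (Submodule.map X.mulVecLin (LinearMap.ker D.mulVecLin))) :
    P₁ = P₂ + P₃ := by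
  have hXtX : IsUnit (Xᵀ * X) :=
    isUnit_transpose_mul_self_of_rank_eq_card (by rw [hX, Fintype.card_fin])
  rw [ker_mul_inv_transpose_mul_self_mul_transpose D hXtX] at hP₁
  refine hP₁.unique (hP₂.add hP₃ fun u hu v hv => ?_)
  exact dotProduct_eq_zero_of_mem_ker_transpose_of_mem_range X hu (LinearMap.map_le_range hv)
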